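/- In a reduction sequence from a 4-regular planar multigraph G to a simple graph G₀ by loop deletions (E₁), single-copy deletions of double edges (E₂, E₃), and deletions of pairs of parallel edges (E₄), each vertex of degree 1 in G₀ either carried exactly one loop and one doubled copy of its incident edge in G, or G is the two-vertex multigraph with a quadruple edge reduced to a single edge (equivalently: in G, a vertex whose reduction has degree 1 had its remaining three edge-ends filled by one loop (2 ends) plus one extra copy of its edge (1 end), unless all three extra ends were copies of the same edge, forcing the other endpoint also to have reduced degree 1). -/

import Mathlib

/-- The degree of a vertex `v` in the multigraph whose edge multiset is `m`:
each edge incidence counts once, a loop at `v` counts twice. -/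
def mdeg {V : Type*} [DecidableEq V] (m : Multiset (Sym2 V)) (v : V) : ℕ :=
  (m.map (fun e => Sym2.lift
    ⟨fun a b => (if a = v then 1 else 0) + (if b = v then 1 else 0),
      fun _ _ => add_comm _ _⟩ e)).sum

/-- The edge multiset of the expanded multigraph: the base edges `m₀`, together with
`l v` loops at each vertex `v` (an `E₁` move contributes 2 to `deg v`), `d e + c e`
extra copies of each edge `e` (an `E₂`/`E₃` doubling contributes 1 to each endpoint),
and `2 * p e` extra copies of `e` for pair insertions (an `E₄` move contributes 2 to
each endpoint). -/
def expandedEdges {V : Type*} [Fintype V] [DecidableEq V]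
    (m₀ : Multiset (Sym2 V)) (l : V → ℕ) (d c p : Sym2 V → ℕ) : Multiset (Sym2 V) :=
  m₀ + (Finset.univ.val.bind fun v : V => Multiset.replicate (l v) s(v, v))
    + ((Finset.univ : Finset (Sym2 V)).val.bind fun e =>
        Multiset.replicate (d e + c e + 2 * p e) e)

/-! The only base edge at `v` is `s(v, w)`, so every extra copy at `v` is a copy of it and no
pair insertion touches `v` (its base degree is not 2). The degree equation at `v` then reads
`1 + 2 l v + (d + c) s(v, w) = 4`, which leaves `l v = 1, (d + c) = 1` or `l v = 0, (d + c) = 3`;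
in the second case the base edge and its three copies already fill the four ends at `w`. -/

section Degree

variable {V : Type*} [DecidableEq V]

theorem mdeg_add (m m' : Multiset (Sym2 V)) (v : V) :
    mdeg (m + m') v = mdeg m v + mdeg m' v := by
  simp only [mdeg, Multiset.map_add, Multiset.sum_add]

theorem mdeg_singleton_pos {e : Sym2 V} {v : V} (hv : v ∈ e) : 0 < mdeg {e} v := by
  induction e using Sym2.ind with
  | _ a b => rcases Sym2.mem_iff.mp hv with rfl | rfl <;> simp [mdeg]

theorem mdeg_pos_of_mem {m : Multiset (Sym2 V)} {e : Sym2 V} {v : V} (he : e ∈ m)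
    (hv : v ∈ e) : 0 < mdeg m v := by
  obtain ⟨m', rfl⟩ := Multiset.exists_cons_of_mem he
  rw [← Multiset.singleton_add, mdeg_add]
  exact Nat.lt_add_right _ (mdeg_singleton_pos hv)

theorem eq_of_mdeg_eq_one {m : Multiset (Sym2 V)} {e e' : Sym2 V} {v : V}
    (hdeg : mdeg m v = 1) (he : e ∈ m) (he' : e' ∈ m) (hv : v ∈ e) (hv' : v ∈ e') :
    e = e' := by
  obtain ⟨m', rfl⟩ := Multiset.exists_cons_of_mem he
  by_contra hne
  have he'm' : e' ∈ m' := (Multiset.mem_cons.mp he').resolve_left (Ne.symm hne)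
  rw [← Multiset.singleton_add, mdeg_add] at hdeg
  have := mdeg_singleton_pos hv
  have := mdeg_pos_of_mem he'm' hv'
  omega

end Degree

section IncidentSum

variable {V M : Type*} [Fintype V] [DecidableEq V] [AddCommMonoid M]

theorem sum_incident_eq_of_mdeg_eq_one {m : Multiset (Sym2 V)} {v : V} {e₀ : Sym2 V}
    (f : Sym2 V → M) (hdeg : mdeg m v = 1) (he₀ : e₀ ∈ m) (hv : v ∈ e₀)
    (hf : ∀ e, f e ≠ 0 → e ∈ m) :
    (∑ e : Sym2 V, if v ∈ e then f e else 0) = f e₀ := by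
  rw [Finset.sum_eq_single e₀ (fun e _ hne => ?_) (by simp), if_pos hv]
  split_ifs with hve
  · by_contra hfe
    exact hne (eq_of_mdeg_eq_one hdeg (hf e hfe) he₀ hve hv)
  · rfl

theorem le_sum_incident [PartialOrder M] [CanonicallyOrderedAdd M] [IsOrderedAddMonoid M]
    {v : V} {e₀ : Sym2 V} (f : Sym2 V → M) (hv : v ∈ e₀) :
    f e₀ ≤ ∑ e : Sym2 V, if v ∈ e then f e else 0 := by
  simpa [hv] using Finset.single_le_sum (f := fun e => if v ∈ e then f e else 0)
    (fun _ _ => zero_le) (Finset.mem_univ e₀)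

end IncidentSum

theorem degree_one_vertex_dichotomy_general {V : Type*} [Fintype V] [DecidableEq V]
    (m₀ : Multiset (Sym2 V)) (l : V → ℕ) (d c p : Sym2 V → ℕ)
    (hsupp : ∀ e : Sym2 V, 0 < d e + c e → e ∈ m₀)
    (hpdeg : ∀ e : Sym2 V, 0 < p e → ∀ u ∈ e, mdeg m₀ u = 2)
    (hdeg : ∀ u : V, mdeg m₀ u + 2 * l u + (∑ e : Sym2 V, if u ∈ e then d e else 0)
        + (∑ e : Sym2 V, if u ∈ e then c e else 0)
        + 2 * (∑ e : Sym2 V, if u ∈ e then p e else 0) = 4)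
    (v w : V) (he₀ : s(v, w) ∈ m₀) (hv1 : mdeg m₀ v = 1) :
    (l v = 1 ∧ d s(v, w) + c s(v, w) = 1 ∧
      (∑ e : Sym2 V, if v ∈ e then p e else 0) = 0) ∨
    (l v = 0 ∧ d s(v, w) + c s(v, w) = 3 ∧ mdeg m₀ w = 1) := by
  have hv : v ∈ s(v, w) := Sym2.mem_mk_left v w
  have hw : w ∈ s(v, w) := Sym2.mem_mk_right v w
  have hD : (∑ e : Sym2 V, if v ∈ e then d e else 0) = d s(v, w) :=
    sum_incident_eq_of_mdeg_eq_one d hv1 he₀ hv fun e he => hsupp e (by omega)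
  have hC : (∑ e : Sym2 V, if v ∈ e then c e else 0) = c s(v, w) :=
    sum_incident_eq_of_mdeg_eq_one c hv1 he₀ hv fun e he => hsupp e (by omega)
  have hP : (∑ e : Sym2 V, if v ∈ e then p e else 0) = 0 :=
    Finset.sum_eq_zero fun e _ => by
      split_ifs with hve
      · by_contra hpe
        have := hpdeg e (Nat.pos_of_ne_zero hpe) v hve
        omega
      · rfl
  have hw_pos := mdeg_pos_of_mem he₀ hw
  have hDw := le_sum_incident d hw
  have hCw := le_sum_incident c hw
  have hdeg_v := hdeg v
  have hdeg_w := hdeg w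
  omega

/-- Consider a reduction of a 4-regular planar multigraph `G` to a
simple graph `G₀` (base edge multiset `m₀`, no loops) using loop deletions (`E₁`, one
loop `l v ≤ 1` per vertex), deletions of extra copies of base edges (`E₂`/`E₃`,
`d e + c e` extra copies of the base edge `e`), and deletions of inserted pairs of
parallel edges (`E₄`, `p e` pairs, only between vertices of degree 2 in `G₀`).  Since
`G` was 4-regular, the vertex degree equations hold at every vertex.  Then for every
vertex `v` of degree 1 in `G₀`, with (unique) incident base edge `s(v, w)`: either `v`
carried exactly one loop and exactly one extra copy of its incident edge in `G` (and no
inserted pairs), or the three missing edge-ends at `v` were all extra copies of the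
single incident edge — which forces the other endpoint `w` also to have degree 1 in
`G₀` (the case where `G` is the two-vertex multigraph with a quadruple edge). -/
theorem degree_one_vertex_dichotomy {V : Type*} [Fintype V] [DecidableEq V]
    (m₀ : Multiset (Sym2 V)) (l : V → ℕ) (d c p : Sym2 V → ℕ)
    (hnoloop : ∀ v : V, s(v, v) ∉ m₀)
    (hl : ∀ v : V, l v ≤ 1)
    (hsupp : ∀ e : Sym2 V, 0 < d e + c e → e ∈ m₀)
    (hpdeg : ∀ e : Sym2 V, 0 < p e → ∀ u ∈ e, mdeg m₀ u = 2)
    (hdeg : ∀ u : V, mdeg m₀ u + 2 * l u + (∑ e : Sym2 V, if u ∈ e then d e else 0)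
        + (∑ e : Sym2 V, if u ∈ e then c e else 0)
        + 2 * (∑ e : Sym2 V, if u ∈ e then p e else 0) = 4)
    (v w : V) (hvw : v ≠ w) (he₀ : s(v, w) ∈ m₀) (hv1 : mdeg m₀ v = 1) :
    (l v = 1 ∧ d s(v, w) + c s(v, w) = 1 ∧
      (∑ e : Sym2 V, if v ∈ e then p e else 0) = 0) ∨
    (l v = 0 ∧ d s(v, w) + c s(v, w) = 3 ∧ mdeg m₀ w = 1) :=
  degree_one_vertex_dichotomy_general m₀ l d c p hsupp hpdeg hdeg v w he₀ hv1
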